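/- arXiv:2412.20273 — 2 statements merged into one kernel-verified Lean document; each statement's English description precedes it below -/
import Mathlib

section
/- Let m be a nonzero integer, let v := 1 + ⌊log₂|m|⌋ and let w := the largest i ∈ ℕ with 2^i ∣ m. Define ℓ := ⌊5(v+3)/4⌋ - w - c, where c = 3 if w = v-1 and v ≡ 1 (mod 4), c = 1 if w = v-1 and v ≡ 3 (mod 4), and c = 0 otherwise. Then there exists a bit string M of length ℓ with π(M) = m; that is, m is representable as an ℓ-bit posit. -/
/-!
Write `m = ±2^w·u` with `u` odd and `2^p ≤ u < 2^(p+1)`, so that `v = w + p + 1`. A positive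
`m` is `(1 + f)·2^(v-1)` with `f = (u - 2^p)/2^p`, a negative one is `-(2 - f)·2^(v-1)` with
`f = (2^(p+1) - u)/2^p`; in both cases `f` needs exactly `p` fraction bits, and the exponent
`v - 1` needs a regime run of `⌊(v-1)/4⌋ + 1` bits, its terminating bit and two exponent bits.
When `u = 1` (where the negative case uses `-2^w = -2·2^(w-1)` instead) there are no fraction
bits, so trailing zero exponent bits are ghost bits and can be dropped; this is the correction `c`.
-/

/-- Integer value of a bit string read MSB → LSB. -/
def bitsToNat (L : List Bool) : ℕ :=
  L.foldl (fun a b => 2 * a + (if b then 1 else 0)) 0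

/-- The posit decoding function `π`. A bit string (MSB → LSB, padded on the right with
zero "ghost bits" as needed) consists of a sign bit `S`, a run `R` of `k ≥ 1` identical
bits, a terminating bit (the negation of the run bits), two exponent bits and the
fraction bits. The all-zeros string encodes `0` (`some 0`), `10…0` encodes NaR (`none`),
and every other string encodes `((1 - 3S) + f) · 2^e` with regime `r = k - 1` (run of
ones) or `r = -k` (run of zeros), exponent value `ê ∈ {0,1,2,3}`, fraction `f ∈ [0,1)`
and exponent `e = (-1)^S (4r + ê + S)`. -/
def positVal : List Bool → Option ℚ
  | [] => some 0
  | S :: rest =>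
    if rest.all (fun b => b == false) then
      if S then none else some 0
    else
      let b0 : Bool := rest.getD 0 false
      let k : ℕ := (rest.takeWhile (fun b => b == b0)).length
      let r : ℤ := if b0 then (k : ℤ) - 1 else -(k : ℤ)
      let ehat : ℤ := 2 * (if rest.getD (k + 1) false then 1 else 0) +
        (if rest.getD (k + 2) false then 1 else 0)
      let F : List Bool := rest.drop (k + 3)
      let f : ℚ := (bitsToNat F : ℚ) / 2 ^ F.length
      let s : ℤ := if S then 1 else 0
      let e : ℤ := (if S then -1 else 1) * (4 * r + ehat + s)
      some (((1 - 3 * (s : ℚ)) + f) * 2 ^ e)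

lemma bitsToNat_append_singleton (L : List Bool) (b : Bool) :
    bitsToNat (L ++ [b]) = 2 * bitsToNat L + b.toNat := by
  cases b <;> simp [bitsToNat]

def natToBits : ℕ → ℕ → List Bool
  | 0, _ => []
  | p + 1, n => natToBits p (n / 2) ++ [decide (n % 2 = 1)]

lemma length_natToBits (p n : ℕ) : (natToBits p n).length = p := by
  induction p generalizing n with
  | zero => rfl
  | succ p ih => simp [natToBits, ih]

lemma bitsToNat_natToBits (p n : ℕ) : bitsToNat (natToBits p n) = n % 2 ^ p := by
  induction p generalizing n with
  | zero => simp [natToBits, bitsToNat, Nat.mod_one]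
  | succ p ih =>
    have hbit : (decide (n % 2 = 1)).toNat = n % 2 := by
      rcases Nat.mod_two_eq_zero_or_one n with h | h <;> simp [h]
    rw [natToBits, bitsToNat_append_singleton, ih, hbit, pow_succ, mul_comm (2 ^ p) 2, Nat.mod_mul]
    omega

lemma getD_append_singleton_default {α : Type*} (l : List α) (d : α) (i : ℕ) :
    (l ++ [d]).getD i d = l.getD i d := by
  rcases lt_or_ge i l.length with h | h
  · exact List.getD_append _ _ _ _ h
  · rw [List.getD_append_right _ _ _ _ h, List.getD_eq_default _ _ h]
    cases i - l.length <;> simp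

lemma bitsToNat_append_false_div (F : List Bool) :
    (bitsToNat (F ++ [false]) : ℚ) / 2 ^ (F ++ [false]).length = bitsToNat F / 2 ^ F.length := by
  rw [bitsToNat_append_singleton, List.length_append, List.length_singleton, pow_succ]
  push_cast
  field_simp
  simp

lemma bitsToNat_drop_append_false_div (F : List Bool) (j : ℕ) :
    (bitsToNat ((F ++ [false]).drop j) : ℚ) / 2 ^ ((F ++ [false]).drop j).length =
      bitsToNat (F.drop j) / 2 ^ (F.drop j).length := by
  rw [List.drop_append]
  rcases Nat.eq_zero_or_pos (j - F.length) with h | h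
  · rw [h, List.drop_zero, bitsToNat_append_false_div]
  · rw [List.drop_eq_nil_of_le (as := [false]) (by rw [List.length_singleton]; omega),
      List.drop_eq_nil_of_le (as := F) (by omega)]
    rfl

lemma length_takeWhile_append_false {rest : List Bool} (h : rest.all (· == false) = false) :
    ((rest ++ [false]).takeWhile (· == rest.getD 0 false)).length =
      (rest.takeWhile (· == rest.getD 0 false)).length := by
  rw [List.takeWhile_append]
  split_ifs with hfull
  · -- the run covers all of `rest`, so it is a run of ones and stops at the appended zero
    have hrun := List.takeWhile_eq_self_iff.mp ((List.takeWhile_prefix _).eq_of_length hfull)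
    have hb0 : rest.getD 0 false = true := by
      by_contra hb
      simp_all
    rw [hfull, hb0]
    simp
  · rfl

lemma positVal_append_false (L : List Bool) : positVal (L ++ [false]) = positVal L := by
  rcases L with _ | ⟨S, rest⟩
  · simp [positVal]
  have hall : (rest ++ [false]).all (· == false) = rest.all (· == false) := by simp
  dsimp only [positVal, List.cons_append]
  rw [hall]
  cases h : rest.all (· == false)
  · simp only [Bool.false_eq_true, if_false]
    rw [getD_append_singleton_default, length_takeWhile_append_false h,
      getD_append_singleton_default, getD_append_singleton_default,
      bitsToNat_drop_append_false_div]
  · rfl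

lemma positVal_append_replicate_false (L : List Bool) (n : ℕ) :
    positVal (L ++ List.replicate n false) = positVal L := by
  induction n with
  | zero => simp
  | succ n ih => rw [List.replicate_succ', ← List.append_assoc, positVal_append_false, ih]

lemma positVal_take_of_forall_drop (L : List Bool) {n : ℕ} (h : ∀ b ∈ L.drop n, b = false) :
    positVal (L.take n) = positVal L := by
  conv_rhs => rw [← List.take_append_drop n L, List.eq_replicate_iff.mpr ⟨rfl, h⟩,
    positVal_append_replicate_false]

def positBits (S b : Bool) (k ê p F : ℕ) : List Bool :=
  S :: (List.replicate k b ++ (!b) :: (natToBits 2 ê ++ natToBits p F))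

lemma length_positBits (S b : Bool) (k ê p F : ℕ) :
    (positBits S b k ê p F).length = k + p + 4 := by
  simp only [positBits, List.length_cons, List.length_append, List.length_replicate,
    length_natToBits]
  omega

lemma positVal_positBits (S b : Bool) {k ê p F : ℕ} (hk : 1 ≤ k) (hê : ê < 4)
    (hF : F < 2 ^ p) :
    positVal (positBits S b k ê p F) =
      some ((1 - 3 * ((if S then 1 else 0 : ℤ) : ℚ) + F / 2 ^ p) *
        (2 : ℚ) ^ ((if S then -1 else 1) *
          (4 * (if b then (k : ℤ) - 1 else -k) + ê + if S then 1 else 0))) := by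
  obtain ⟨x, y, hxy, rfl⟩ :
      ∃ x y : Bool, natToBits 2 ê = [x, y] ∧ 2 * x.toNat + y.toNat = ê := by
    interval_cases ê <;> exact ⟨_, _, rfl, rfl⟩
  obtain ⟨k, rfl⟩ := Nat.exists_eq_add_of_le' hk
  set rest := List.replicate (k + 1) b ++
    (!b) :: (natToBits 2 (2 * x.toNat + y.toNat) ++ natToBits p F)
  have hall : rest.all (· == false) = false := by
    cases b <;> simp [rest, List.replicate_succ]
  have h0 : rest.getD 0 false = b := by simp [rest, List.replicate_succ]
  have hrun : (rest.takeWhile (· == b)).length = k + 1 := by simp [rest]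
  have h1 : rest.getD (k + 1 + 1) false = x := by simp [rest, hxy]
  have h2 : rest.getD (k + 1 + 2) false = y := by simp [rest, hxy]
  have h3 : rest.drop (k + 1 + 3) = natToBits p F := by simp [rest, hxy, List.drop_append]
  dsimp only [positVal, positBits]
  rw [hall]
  simp only [Bool.false_eq_true, if_false]
  rw [h0, hrun, h1, h2, h3, bitsToNat_natToBits, length_natToBits, Nat.mod_eq_of_lt hF]
  cases x <;> cases y <;> simp

lemma positVal_positBits_pos (e p F : ℕ) (hF : F < 2 ^ p) :
    positVal (positBits false true (e / 4 + 1) (e % 4) p F) =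
      some ((1 + (F : ℚ) / 2 ^ p) * 2 ^ e) := by
  rw [positVal_positBits false true (by omega) (Nat.mod_lt _ (by norm_num)) hF,
    ← zpow_natCast (2 : ℚ) e]
  congr 3
  · simp
  · simp only [Bool.false_eq_true, ↓reduceIte]
    omega

lemma positVal_positBits_neg (e p F : ℕ) (hF : F < 2 ^ p) :
    positVal (positBits true false (e / 4 + 1) (3 - e % 4) p F) =
      some (-((2 - (F : ℚ) / 2 ^ p) * 2 ^ e)) := by
  rw [positVal_positBits true false (by omega) (by omega) hF, ← zpow_natCast (2 : ℚ) e]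
  congr 1
  convert_to ((-2 : ℚ) + F / 2 ^ p) * 2 ^ (e : ℤ) = _ using 3
  · norm_num
  · simp only [Bool.false_eq_true, ↓reduceIte]
    omega
  · ring

def IsPositRepresentable (n : ℕ) (x : ℚ) : Prop :=
  ∃ M : List Bool, M.length = n ∧ positVal M = some x

lemma IsPositRepresentable.of_positVal_take {M : List Bool} {x : ℚ} (hM : positVal M = some x)
    {n : ℕ} (hn : n ≤ M.length) (h : ∀ b ∈ M.drop n, b = false) :
    IsPositRepresentable n x :=
  ⟨M.take n, by simpa using hn, by rw [positVal_take_of_forall_drop M h, hM]⟩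

lemma isPositRepresentable_two_pow_mul {w p u : ℕ} (hlo : 2 ^ p ≤ u) (hhi : u < 2 ^ (p + 1)) :
    IsPositRepresentable ((w + p) / 4 + p + 5) (2 ^ w * u) := by
  rw [pow_succ] at hhi
  refine ⟨_, by rw [length_positBits]; omega,
    positVal_positBits_pos (w + p) p (u - 2 ^ p) (by omega) |>.trans ?_⟩
  congr 1
  push_cast [Nat.cast_sub hlo]
  field_simp
  ring

lemma isPositRepresentable_neg_two_pow_mul {w p u : ℕ} (hlo : 2 ^ p < u)
    (hhi : u < 2 ^ (p + 1)) :
    IsPositRepresentable ((w + p) / 4 + p + 5) (-(2 ^ w * u)) := by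
  rw [pow_succ] at hhi
  refine ⟨_, by rw [length_positBits]; omega,
    positVal_positBits_neg (w + p) p (2 ^ p * 2 - u) (by omega) |>.trans ?_⟩
  congr 1
  push_cast [Nat.cast_sub hhi.le]
  field_simp
  ring

def positIntLength (v w : ℕ) : ℕ :=
  5 * (v + 3) / 4 - w -
    (if w = v - 1 ∧ v % 4 = 1 then 3 else if w = v - 1 ∧ v % 4 = 3 then 1 else 0)

lemma positIntLength_add_one_self (e : ℕ) :
    positIntLength (e + 1) e =
      e / 4 + 5 - (if e % 4 = 0 then 3 else if e % 4 = 2 then 1 else 0) := by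
  unfold positIntLength
  split_ifs <;> omega

lemma isPositRepresentable_two_pow (e : ℕ) :
    IsPositRepresentable (positIntLength (e + 1) e) (2 ^ e) := by
  have hM : positVal (positBits false true (e / 4 + 1) (e % 4) 0 0) = some (2 ^ e) := by
    simpa using positVal_positBits_pos e 0 0 (by norm_num)
  refine .of_positVal_take hM ?_ ?_ <;> rw [positIntLength_add_one_self]
  · rw [length_positBits]
    omega
  obtain ⟨q, r, hr, rfl⟩ : ∃ q r, r < 4 ∧ e = 4 * q + r :=
    ⟨e / 4, e % 4, Nat.mod_lt _ (by norm_num), (Nat.div_add_mod e 4).symm⟩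
  rw [show (4 * q + r) / 4 = q by omega, show (4 * q + r) % 4 = r by omega]
  interval_cases r <;> simp [positBits, natToBits, List.drop_append]

lemma isPositRepresentable_neg_two_pow (e : ℕ) :
    IsPositRepresentable (positIntLength (e + 1) e) (-2 ^ e) := by
  rcases e with _ | e
  · -- `-1` is the only negative integer whose regime is a run of ones (`r = 0`, exponent `-1`)
    exact ⟨[true, true], rfl, by norm_num [positVal, bitsToNat]⟩
  have hM : positVal (positBits true false (e / 4 + 1) (3 - e % 4) 0 0) =
      some (-2 ^ (e + 1)) := by
    rw [positVal_positBits_neg e 0 0 (by norm_num), pow_succ]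
    congr 1
    push_cast
    ring
  refine .of_positVal_take hM ?_ ?_ <;> rw [positIntLength_add_one_self]
  · rw [length_positBits]
    split_ifs <;> omega
  obtain ⟨q, r, hr, rfl⟩ : ∃ q r, r < 4 ∧ e = 4 * q + r :=
    ⟨e / 4, e % 4, Nat.mod_lt _ (by norm_num), (Nat.div_add_mod e 4).symm⟩
  rw [show (4 * q + r) / 4 = q by omega, show (4 * q + r) % 4 = r by omega,
    show (4 * q + r + 1) / 4 = q + (r + 1) / 4 by omega,
    show (4 * q + r + 1) % 4 = (r + 1) % 4 by omega]
  interval_cases r <;> simp [positBits, natToBits, List.drop_append]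

lemma isPositRepresentable_two_pow_mul_odd {w p u : ℕ} (hu : Odd u) (hlo : 2 ^ p ≤ u)
    (hhi : u < 2 ^ (p + 1)) :
    IsPositRepresentable (positIntLength (w + p + 1) w) (2 ^ w * u) ∧
      IsPositRepresentable (positIntLength (w + p + 1) w) (-(2 ^ w * u)) := by
  rcases Nat.eq_zero_or_pos p with rfl | hp
  · obtain rfl : u = 1 := by rw [pow_zero] at hlo; rw [zero_add, pow_one] at hhi; omega
    simpa using ⟨isPositRepresentable_two_pow w, isPositRepresentable_neg_two_pow w⟩
  have hlen : positIntLength (w + p + 1) w = (w + p) / 4 + p + 5 := by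
    unfold positIntLength
    rw [if_neg (by omega), if_neg (by omega)]
    omega
  have hlo' : 2 ^ p < u := hlo.lt_of_ne fun h => by
    rw [← h] at hu
    exact Nat.not_even_iff_odd.mpr hu (Nat.even_pow.mpr ⟨even_two, hp.ne'⟩)
  rw [hlen]
  exact ⟨isPositRepresentable_two_pow_mul hlo hhi, isPositRepresentable_neg_two_pow_mul hlo' hhi⟩

theorem posit_integer_representation_general (m : ℤ)
    (v w ℓ : ℕ)
    (hv : v = 1 + Nat.log 2 m.natAbs)
    (hw1 : (2 : ℤ) ^ w ∣ m) (hw2 : ∀ i : ℕ, (2 : ℤ) ^ i ∣ m → i ≤ w)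
    (hℓ : ℓ = 5 * (v + 3) / 4 - w -
      (if w = v - 1 ∧ v % 4 = 1 then 3
       else if w = v - 1 ∧ v % 4 = 3 then 1
       else 0)) :
    ∃ M : List Bool, M.length = ℓ ∧ positVal M = some (m : ℚ) := by
  obtain ⟨q, rfl⟩ := hw1
  have hq : Odd q := Int.not_even_iff_odd.mp fun ⟨t, ht⟩ =>
    absurd (hw2 (w + 1) ⟨t, by rw [ht]; ring⟩) (by omega)
  obtain ⟨u, hqu⟩ := Int.eq_nat_or_neg q
  have hnat : q.natAbs = u := by rcases hqu with rfl | rfl <;> simp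
  have hu : Odd u := hnat ▸ Int.natAbs_odd.mpr hq
  set p := Nat.log 2 u
  have hlo : 2 ^ p ≤ u := Nat.pow_log_le_self 2 hu.pos.ne'
  have hhi : u < 2 ^ (p + 1) := Nat.lt_pow_succ_log_self (by norm_num) u
  have hlog : Nat.log 2 (2 ^ w * u) = w + p := Nat.log_eq_of_pow_le_of_lt_pow
    (by rw [pow_add]; gcongr) (by rw [add_assoc, pow_add]; gcongr)
  have hv' : v = w + p + 1 := by
    rw [hv, Int.natAbs_mul, Int.natAbs_pow, hnat, show Int.natAbs 2 = 2 from rfl, hlog]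
    omega
  obtain ⟨hpos, hneg⟩ := isPositRepresentable_two_pow_mul_odd (w := w) hu hlo hhi
  rw [← hv'] at hpos hneg
  change IsPositRepresentable (positIntLength v w) _ at hpos hneg
  subst hℓ
  rcases hqu with rfl | rfl
  · push_cast
    exact hpos
  · push_cast
    rw [mul_neg]
    exact hneg

/-- **Posit integer representation (existence).**
Let `m ≠ 0`, `v = 1 + ⌊log₂ |m|⌋`, `w` the largest `i` with `2^i ∣ m`, and
`ℓ = ⌊5(v+3)/4⌋ - w - c` with `c = 3` if `w = v-1` and `v ≡ 1 [MOD 4]`,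
`c = 1` if `w = v-1` and `v ≡ 3 [MOD 4]`, and `c = 0` otherwise.
Then `m` is representable as an `ℓ`-bit posit. -/
theorem posit_integer_representation (m : ℤ) (hm : m ≠ 0)
    (v w ℓ : ℕ)
    (hv : v = 1 + Nat.log 2 m.natAbs)
    (hw1 : (2 : ℤ) ^ w ∣ m) (hw2 : ∀ i : ℕ, (2 : ℤ) ^ i ∣ m → i ≤ w)
    (hℓ : ℓ = 5 * (v + 3) / 4 - w -
      (if w = v - 1 ∧ v % 4 = 1 then 3
       else if w = v - 1 ∧ v % 4 = 3 then 1
       else 0)) :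
    ∃ M : List Bool, M.length = ℓ ∧ positVal M = some (m : ℚ) :=
  posit_integer_representation_general m v w ℓ hv hw1 hw2 hℓ
end

section
/- Let n ∈ ℕ with n ≥ 3 and let v := ⌊4(n-3)/5⌋. Then the integer 2^v + 1 is not representable as an n-bit posit: there exists no bit string M of length n with π(M) = 2^v + 1. Hence 2^{⌊4(n-3)/5⌋} is the largest consecutive integer representable by n-bit posits. -/
/-!
An integer `m` with `2^E ≤ m < 2^(E+1)` can only be the posit `(1 + f) · 2^E`, and `-m` with
`2^E < m ≤ 2^(E+1)` only `(-2 + f) · 2^E`. The regime of exponent `E` takes `⌊E/4⌋ + 2` bits,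
so `n - ⌊E/4⌋ - 5` fraction bits remain, and `±m` is representable as soon as the `E` bits of
`f` fit into them. For `E < v = ⌊4(n-3)/5⌋` they always do, and powers of two need none, which
covers every `|m| ≤ 2^v`. The integer `2^v + 1`, however, has exponent `v` and a nonzero last
bit, so it needs `v ≤ n - ⌊v/4⌋ - 5`, and this fails exactly at `v = ⌊4(n-3)/5⌋`.
-/

theorem foldl_bitsToNat (L : List Bool) (a : ℕ) :
    L.foldl (fun a b => 2 * a + (if b then 1 else 0)) a = a * 2 ^ L.length + bitsToNat L := by
  induction L generalizing a with
  | nil => simp [bitsToNat]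
  | cons b L ih =>
    simp only [List.foldl_cons, List.length_cons, bitsToNat] at ih ⊢
    rw [ih, ih (2 * 0 + _)]
    ring

theorem bitsToNat_cons (b : Bool) (L : List Bool) :
    bitsToNat (b :: L) = b.toNat * 2 ^ L.length + bitsToNat L := by
  rw [bitsToNat, List.foldl_cons, foldl_bitsToNat]
  cases b <;> rfl

theorem bitsToNat_lt (L : List Bool) : bitsToNat L < 2 ^ L.length := by
  induction L with
  | nil => simp [bitsToNat]
  | cons b L ih =>
    rw [bitsToNat_cons, List.length_cons, pow_succ]
    have := Bool.toNat_le b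
    nlinarith

theorem bitsToNat_replicate_false (a : ℕ) : bitsToNat (List.replicate a false) = 0 := by
  induction a with
  | zero => rfl
  | succ a ih => simp [List.replicate_succ, bitsToNat_cons, ih]

theorem exists_bitsToNat_eq {p N : ℕ} (hN : N < 2 ^ p) :
    ∃ F : List Bool, F.length = p ∧ bitsToNat F = N := by
  induction p generalizing N with
  | zero => exact ⟨[], rfl, by simp_all [bitsToNat]⟩
  | succ p ih =>
    rw [pow_succ] at hN
    by_cases h : 2 ^ p ≤ N
    · obtain ⟨F, hF, hFN⟩ := ih (N := N - 2 ^ p) (by omega)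
      exact ⟨true :: F, by simp [hF], by simp [bitsToNat_cons, hF, hFN]; omega⟩
    · obtain ⟨F, hF, hFN⟩ := ih (N := N) (by omega)
      exact ⟨false :: F, by simp [hF], by simp [bitsToNat_cons, hFN]⟩

/-- The value `((1 - 3S) + f) · 2^e` of a posit whose regime is a run of `k` copies of `b`, whose
exponent bits have value `ê` and whose fraction bits are `F`. -/
def fieldsValue (S b : Bool) (k ê : ℕ) (F : List Bool) : ℚ :=
  ((if S then -2 else 1) + (bitsToNat F : ℚ) / 2 ^ F.length) *
    2 ^ (if S then -(4 * (if b then (k : ℤ) - 1 else -k) + ê + 1)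
      else 4 * (if b then (k : ℤ) - 1 else -k) + ê)

-- Exponent bits beyond the end of `tail` are ghost bits, read as `false` by `getD`.
theorem positVal_cons_replicate_append (S b : Bool) {k : ℕ} (hk : 1 ≤ k) (tail : List Bool) :
    positVal (S :: (List.replicate k b ++ (!b) :: tail)) =
      some (fieldsValue S b k (2 * (tail.getD 0 false).toNat + (tail.getD 1 false).toNat)
        (tail.drop 2)) := by
  obtain ⟨k, rfl⟩ : ∃ j, k = j + 1 := ⟨k - 1, by omega⟩
  cases S <;> cases b <;>
    simp [positVal, fieldsValue, List.replicate_succ, List.getElem?_append_right, List.drop_append,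
      Bool.toNat, Bool.cond_eq_ite, Nat.cast_ite, -mul_eq_mul_left_iff, -mul_eq_mul_right_iff] <;>
    ring_nf

-- An odd `ê` has its last exponent bit set, so that bit lies inside `M` rather than among the
-- ghost bits.
theorem exists_fieldsValue_of_positVal_eq {M : List Bool} {x : ℚ} (h : positVal M = some x)
    (hx : x ≠ 0) :
    ∃ S b k ê F, 1 ≤ k ∧ ê ≤ 3 ∧ (ê % 2 = 1 → k + 4 ≤ M.length) ∧
      F.length = M.length - k - 4 ∧ x = fieldsValue S b k ê F := by
  obtain _ | ⟨S, rest⟩ := M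
  · simp_all [positVal]
  by_cases hall : rest.all (· == false)
  · rw [positVal, if_pos hall] at h
    cases S <;> simp_all
  have hrest : rest ≠ [] := by rintro rfl; simp at hall
  rw [positVal, if_neg hall, Option.some.injEq] at h
  set b := rest.getD 0 false
  set k := (rest.takeWhile (· == b)).length
  have hk : 1 ≤ k := by
    obtain ⟨c, t, rfl⟩ := List.exists_cons_of_ne_nil hrest
    simp [k, b]
  have hb₂ : rest.getD (k + 2) false = true → k + 4 ≤ (S :: rest).length := by
    intro hb
    by_contra hlen
    rw [List.getD_eq_default _ _ (by simp at hlen; omega)] at hb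
    exact Bool.false_ne_true hb
  refine ⟨S, b, k, 2 * (rest.getD (k + 1) false).toNat + (rest.getD (k + 2) false).toNat,
    rest.drop (k + 3), hk, ?_, ?_, by simp; omega, ?_⟩
  · have := Bool.toNat_le (rest.getD (k + 1) false)
    have := Bool.toNat_le (rest.getD (k + 2) false)
    omega
  · intro hodd
    apply hb₂
    revert hodd
    cases rest.getD (k + 2) false <;> simp
  · rw [← h, fieldsValue]
    generalize rest.getD (k + 1) false = b₁
    generalize rest.getD (k + 2) false = b₂
    cases S <;> cases b₁ <;> cases b₂ <;>
      simp [-mul_eq_mul_left_iff, -mul_eq_mul_right_iff] <;> ring_nf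

theorem bitsToNat_div_lt_one (F : List Bool) : (bitsToNat F : ℚ) / 2 ^ F.length < 1 := by
  rw [div_lt_one (by positivity)]
  exact_mod_cast bitsToNat_lt F

theorem fieldsValue_lt_one {S b : Bool} {k ê : ℕ} (F : List Bool) (hk : 1 ≤ k) (hê : ê ≤ 3)
    (h : S = true ∨ b = false) : fieldsValue S b k ê F < 1 := by
  have hf := bitsToNat_div_lt_one F
  have hf0 : (0 : ℚ) ≤ bitsToNat F / 2 ^ F.length := by positivity
  rcases h with rfl | rfl
  · have := zpow_pos (two_pos (α := ℚ)) (-(4 * (if b then (k : ℤ) - 1 else -k) + ê + 1))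
    simp only [fieldsValue, if_true]
    nlinarith
  · cases S
    · have he : -(4 * (k : ℤ)) + ê ≤ -1 := by omega
      have hle : (2 : ℚ) ^ (-(4 * (k : ℤ)) + ê) ≤ 2⁻¹ :=
        (zpow_le_zpow_right₀ one_le_two he).trans_eq (zpow_neg_one 2)
      have := zpow_pos (two_pos (α := ℚ)) (-(4 * (k : ℤ)) + ê)
      simp only [fieldsValue, Bool.false_eq_true, if_false, mul_neg]
      nlinarith
    · have := zpow_pos (two_pos (α := ℚ)) (-(4 * -(k : ℤ) + ê + 1))
      simp only [fieldsValue, Bool.false_eq_true, if_false, if_true]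
      nlinarith

theorem fieldsValue_false_true {k : ℕ} (ê : ℕ) (F : List Bool) (hk : 1 ≤ k) :
    fieldsValue false true k ê F = (1 + bitsToNat F / 2 ^ F.length) * 2 ^ (4 * (k - 1) + ê) := by
  simp only [fieldsValue, Bool.false_eq_true, if_false, if_true]
  congr 1
  rw [← zpow_natCast]
  push_cast [Nat.cast_sub hk]
  rfl

theorem positVal_replicate_false (n : ℕ) : positVal (List.replicate n false) = some 0 := by
  cases n <;> simp [positVal, List.replicate_succ]

theorem positVal_cons_true_false_replicate (S : Bool) (m : ℕ) :
    positVal (S :: true :: false :: List.replicate m false) = some (if S then -1 else 1) := by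
  have := positVal_cons_replicate_append S true le_rfl (List.replicate m false)
  cases S <;> simp_all [fieldsValue, List.drop_replicate, bitsToNat_replicate_false]

theorem exists_bits_div_two_pow_eq {E p j : ℕ} (hj : j < 2 ^ E) (hdvd : 2 ^ E ∣ j * 2 ^ p) :
    ∃ F : List Bool, F.length = p ∧ (bitsToNat F : ℚ) / 2 ^ p = j / 2 ^ E := by
  obtain ⟨N, hN⟩ := hdvd
  have hNp : N < 2 ^ p := by
    refine Nat.lt_of_mul_lt_mul_left (a := 2 ^ E) ?_
    rw [← hN]
    exact Nat.mul_lt_mul_of_pos_right hj (by positivity)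
  obtain ⟨F, hF, hFN⟩ := exists_bitsToNat_eq hNp
  refine ⟨F, hF, ?_⟩
  rw [div_eq_div_iff (by positivity) (by positivity), hFN]
  exact_mod_cast (hN.trans (mul_comm _ _)).symm

theorem exists_positVal_eq_dyadic (S : Bool) {n E j : ℕ} (hn : E / 4 + 5 ≤ n) (hj : j < 2 ^ E)
    (hdvd : 2 ^ E ∣ j * 2 ^ (n - E / 4 - 5)) :
    ∃ M : List Bool, M.length = n ∧
      positVal M = some (((if S then -2 else 1) + (j : ℚ) / 2 ^ E) * 2 ^ E) := by
  obtain ⟨F, hF, hFj⟩ := exists_bits_div_two_pow_eq hj hdvd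
  -- For `S = true` the exponent is `-(4r + ê + 1) = 4k - ê - 1`, hence `ê = 3 - E % 4`.
  obtain ⟨ê, hê4, hêE⟩ : ∃ ê, ê < 4 ∧ ê = if S then 3 - E % 4 else E % 4 :=
    ⟨_, by split_ifs <;> omega, rfl⟩
  refine ⟨S :: (List.replicate (E / 4 + 1) (!S) ++
    (!!S) :: decide (2 ≤ ê) :: decide (ê % 2 = 1) :: F), by simp [hF]; omega, ?_⟩
  have hê : 2 * (decide (2 ≤ ê)).toNat + (decide (ê % 2 = 1)).toNat = ê := by
    interval_cases ê <;> rfl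
  rw [positVal_cons_replicate_append S (!S) (by omega)]
  simp only [fieldsValue, List.drop_succ_cons, List.drop_zero, hF, hFj, List.getD_cons_zero,
    List.getD_cons_succ, hê]
  rw [← zpow_natCast]
  congr 3
  cases S <;> simp [hêE] <;> omega

theorem exponent_eq_of_mantissa_mul_two_pow_eq {p N E v : ℕ} (hN : N < 2 ^ p)
    (h : (1 + N / 2 ^ p : ℚ) * 2 ^ E = 2 ^ v + 1) :
    (E = v ∧ 1 ≤ v ∧ v ≤ p) ∨ (E = 1 ∧ v = 0) := by
  have hZ : (2 ^ p + N) * 2 ^ E = 2 ^ p * (2 ^ v + 1) := by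
    field_simp at h
    exact_mod_cast h
  have hp : 0 < 2 ^ p := by positivity
  have hlo : 2 ^ E ≤ 2 ^ v + 1 := by
    refine Nat.le_of_mul_le_mul_left ?_ hp
    calc 2 ^ p * 2 ^ E ≤ (2 ^ p + N) * 2 ^ E := Nat.mul_le_mul_right _ (by omega)
      _ = _ := hZ
  have hhi : 2 ^ v + 1 < 2 ^ (E + 1) := by
    refine Nat.lt_of_mul_lt_mul_left (a := 2 ^ p) ?_
    calc 2 ^ p * (2 ^ v + 1) = (2 ^ p + N) * 2 ^ E := hZ.symm
      _ < (2 ^ p + 2 ^ p) * 2 ^ E := Nat.mul_lt_mul_of_pos_right (by omega) (by positivity)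
      _ = 2 ^ p * 2 ^ (E + 1) := by ring
  have hvE : v < E + 1 := (Nat.pow_lt_pow_iff_right (a := 2) (by norm_num)).1 (by omega)
  have hEv : E < v + 2 := (Nat.pow_lt_pow_iff_right (a := 2) (by norm_num)).1 (by
    rw [pow_add]; have := Nat.one_le_two_pow (n := v); omega)
  obtain rfl | rfl : E = v ∨ E = v + 1 := by omega
  · left
    have hNv : N * 2 ^ E = 2 ^ p := by linarith
    have hv : 1 ≤ E := by
      by_contra h0
      simp_all
    exact ⟨rfl, hv, (Nat.pow_dvd_pow_iff_le_right (by norm_num)).1 (Dvd.intro_left N hNv)⟩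
  · right
    have : ¬ 1 < 2 ^ v := by rw [pow_succ] at hlo; omega
    have hv : v = 0 := by simpa [Nat.one_lt_two_pow_iff] using this
    exact ⟨by omega, hv⟩

theorem exists_positVal_eq_natCast {n m : ℕ} (h2 : 2 ≤ m) (hm : m ≤ 2 ^ (4 * (n - 3) / 5)) :
    ∃ M : List Bool, M.length = n ∧ positVal M = some (m : ℚ) := by
  obtain ⟨E, hE, hE'⟩ : ∃ E, 2 ^ E ≤ m ∧ m < 2 ^ E * 2 :=
    ⟨Nat.log 2 m, Nat.pow_log_le_self 2 (by omega),
      Nat.lt_pow_succ_log_self (b := 2) (by norm_num) m⟩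
  have hEv : E ≤ 4 * (n - 3) / 5 := (Nat.pow_le_pow_iff_right (by norm_num)).1 (hE.trans hm)
  have hv : 1 ≤ 4 * (n - 3) / 5 := Nat.one_le_iff_ne_zero.2 fun h0 => by simp [h0] at hm; omega
  have hn : 5 ≤ n := by omega
  have h1 : E / 4 + 5 ≤ n := by omega
  have hj : m - 2 ^ E < 2 ^ E := by omega
  have hdvd : 2 ^ E ∣ (m - 2 ^ E) * 2 ^ (n - E / 4 - 5) := by
    rcases Nat.eq_zero_or_pos (m - 2 ^ E) with h0 | hpos
    · simp [h0]
    -- `m` is not a power of two, so `E < v`: this is what leaves room for `E` fraction bits.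
    have hEv' : E < 4 * (n - 3) / 5 :=
      (Nat.pow_lt_pow_iff_right (a := 2) (by norm_num)).1 (by omega)
    exact Dvd.dvd.mul_left (pow_dvd_pow 2 (by omega)) _
  obtain ⟨M, hM, hval⟩ := exists_positVal_eq_dyadic false h1 hj hdvd
  refine ⟨M, hM, hval.trans ?_⟩
  congr 1
  field_simp
  push_cast [hE]
  ring

theorem exists_positVal_eq_neg_natCast {n m : ℕ} (h2 : 2 ≤ m)
    (hm : m ≤ 2 ^ (4 * (n - 3) / 5)) :
    ∃ M : List Bool, M.length = n ∧ positVal M = some (-(m : ℚ)) := by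
  obtain ⟨E, hE, hE'⟩ : ∃ E, 2 ^ E ≤ m - 1 ∧ m - 1 < 2 ^ E * 2 :=
    ⟨Nat.log 2 (m - 1), Nat.pow_log_le_self 2 (by omega),
      Nat.lt_pow_succ_log_self (b := 2) (by norm_num) _⟩
  have hEv : E < 4 * (n - 3) / 5 := (Nat.pow_lt_pow_iff_right (a := 2) (by norm_num)).1 (by omega)
  obtain ⟨M, hM, hval⟩ := exists_positVal_eq_dyadic true (n := n) (E := E) (j := 2 ^ E * 2 - m)
    (by omega) (by omega) (Dvd.dvd.mul_left (pow_dvd_pow 2 (by omega)) _)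
  refine ⟨M, hM, hval.trans ?_⟩
  congr 1
  field_simp
  push_cast [show m ≤ 2 ^ E * 2 by omega]
  ring

theorem exists_positVal_eq_intCast {n : ℕ} (hn : 3 ≤ n) {m : ℤ}
    (hm : |m| ≤ 2 ^ (4 * (n - 3) / 5)) :
    ∃ M : List Bool, M.length = n ∧ positVal M = some (m : ℚ) := by
  obtain ⟨hlo, hhi⟩ := abs_le.1 hm
  have hlen (S : Bool) : (S :: true :: false :: List.replicate (n - 3) false).length = n := by
    simp; omega
  obtain rfl | rfl | rfl | h2 | h2 : m = 0 ∨ m = 1 ∨ m = -1 ∨ 2 ≤ m ∨ m ≤ -2 := by omega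
  · exact ⟨List.replicate n false, by simp, by simp [positVal_replicate_false]⟩
  · exact ⟨_, hlen false, by simp [positVal_cons_true_false_replicate]⟩
  · exact ⟨_, hlen true, by simp [positVal_cons_true_false_replicate]⟩
  · lift m to ℕ using by omega
    exact_mod_cast exists_positVal_eq_natCast (by omega) (by exact_mod_cast hhi)
  · obtain ⟨k, rfl⟩ : ∃ k : ℕ, m = -k := ⟨m.natAbs, by omega⟩
    simpa using exists_positVal_eq_neg_natCast (n := n) (m := k) (by omega)
      (by have : (k : ℤ) ≤ 2 ^ (4 * (n - 3) / 5) := by linarith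
          exact_mod_cast this)

theorem not_exists_positVal_eq_two_pow_add_one (n : ℕ) :
    ¬ ∃ M : List Bool, M.length = n ∧ positVal M = some (2 ^ (4 * (n - 3) / 5) + 1) := by
  rintro ⟨M, rfl, hval⟩
  obtain ⟨S, b, k, ê, F, hk, hê, hodd, hF, hx⟩ :=
    exists_fieldsValue_of_positVal_eq hval (by positivity)
  obtain ⟨rfl, rfl⟩ : S = false ∧ b = true := by
    by_contra hSb
    have hlt : S = true ∨ b = false := by cases S <;> cases b <;> simp_all
    have := fieldsValue_lt_one F hk hê hlt
    have : (1 : ℚ) ≤ 2 ^ (4 * (M.length - 3) / 5) + 1 := le_add_of_nonneg_left (by positivity)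
    linarith
  rw [fieldsValue_false_true ê F hk, hF] at hx
  have := exponent_eq_of_mantissa_mul_two_pow_eq (hF ▸ bitsToNat_lt F) hx.symm
  omega

/-- **Largest consecutive posit integer.**
For `n ≥ 3` and `v = ⌊4(n-3)/5⌋`, the integer `2^v + 1` is not representable as an
`n`-bit posit; hence `2^v` is the largest consecutive integer of `n`-bit posits,
i.e. the greatest `M₀` such that every integer `m` with `|m| ≤ M₀` is representable
as an `n`-bit posit. -/
theorem posit_largest_consecutive_integer (n : ℕ) (hn : 3 ≤ n) (v : ℕ)
    (hv : v = 4 * (n - 3) / 5) :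
    (¬ ∃ M : List Bool, M.length = n ∧ positVal M = some (((2 ^ v + 1 : ℤ) : ℚ))) ∧
    IsGreatest {M₀ : ℤ | ∀ m : ℤ, |m| ≤ M₀ →
      ∃ M : List Bool, M.length = n ∧ positVal M = some (m : ℚ)} (2 ^ v) := by
  subst hv
  have hnot := not_exists_positVal_eq_two_pow_add_one n
  push_cast
  refine ⟨hnot, fun m hm => exists_positVal_eq_intCast hn hm, fun M₀ hM₀ => ?_⟩
  by_contra hlt
  have := hM₀ (2 ^ (4 * (n - 3) / 5) + 1) (by rw [abs_of_pos (by positivity)]; omega)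
  exact hnot (by exact_mod_cast this)
end
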